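/- arXiv:1905.06243 — 3 statements merged into one kernel-verified Lean document; each statement's English description precedes it below -/
import Mathlib

section
/- Let (𝒞, J) be a small site and let E = Sheaf(𝒞, J, Type u) be the category of J-sheaves of u-small types. Declare a sieve S on an object X of E to be covering if the family of all morphisms belonging to S is jointly epimorphic in E (equivalently, the induced morphism from the coproduct of the domains of a generating family of S to X is an epimorphism of sheaves). Then these covering sieves form a Grothendieck topology K on E, and a presheaf of u-small types F : Eᵒᵖ ⟶ Type u is a K-sheaf if and only if F is representable. -/
/-!
STATEMENT 2: Let `(𝒞, J)` be a small site and `E = Sheaf J (Type u)` the category of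
`J`-sheaves of `u`-small types.  Declaring a sieve `S` on `X : E` to be covering when the
family of all morphisms belonging to `S` is jointly epimorphic in `E` yields a Grothendieck
topology `K` on `E`, and a presheaf `F : Eᵒᵖ ⥤ Type u` is a `K`-sheaf if and only if `F` is
representable.
-/

open CategoryTheory CategoryTheory.Limits

universe u

/-- A sieve is jointly epimorphic if the family of all morphisms belonging to it can be
jointly cancelled from the right. -/
def CategoryTheory.Sieve.JointlyEpic {E : Type*} [Category E] {X : E} (S : Sieve X) : Prop :=
  ∀ ⦃Z : E⦄ (g h : X ⟶ Z),
    (∀ ⦃W : E⦄ (f : W ⟶ X), S.arrows f → f ≫ g = f ≫ h) → g = h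

/-!
The sheafified Yoneda functor `G : 𝒞 ⥤ E` is locally full and locally faithful, because
`toSheafify` is locally surjective and locally injective. Take `K` to consist of the sieves `S`
on `X` through which every section `x : G c ⟶ X` factors `J`-locally. Then `S ∈ K` says exactly
that the subpresheaf of sections of `X` lying in `S` is locally surjective, i.e. that its
sheafification maps epimorphically onto `X`, i.e. that `S` is jointly epimorphic.

`G` makes `(𝒞, J)` a dense subsite of `(E, K)`. For a `K`-sheaf `F` with restriction `X = F ∘ G`
this gives `F Y ≃ (yoneda Y ⟶ F) ≃ (Y ∘ G ⟶ F ∘ G) ≃ (Y ⟶ X)` naturally in `Y`, so `F` is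
represented by `X`. Conversely, by the comparison lemma every `J`-sheaf `X` is the restriction
of a `K`-sheaf, which is then represented by `X`; hence `yoneda.obj X` is a `K`-sheaf.
-/

namespace JointlyEpicTopology

open Opposite

variable {𝒞 : Type u} [SmallCategory 𝒞] (J : GrothendieckTopology 𝒞)

noncomputable abbrev sheafifiedYoneda : 𝒞 ⥤ Sheaf J (Type u) :=
  yoneda ⋙ presheafToSheaf J (Type u)

local notation "G" => sheafifiedYoneda J

noncomputable def sheafifiedYonedaEquiv {c : 𝒞} {X : Sheaf J (Type u)} :
    ((G).obj c ⟶ X) ≃ X.obj.obj (op c) :=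
  ((sheafificationAdjunction J (Type u)).homEquiv (yoneda.obj c) X).trans yonedaEquiv

variable {J}

lemma sheafifiedYonedaEquiv_naturality_left {c c' : 𝒞} (g : c' ⟶ c) {X : Sheaf J (Type u)}
    (x : (G).obj c ⟶ X) :
    sheafifiedYonedaEquiv J ((G).map g ≫ x) = X.obj.map g.op (sheafifiedYonedaEquiv J x) := by
  simp only [sheafifiedYonedaEquiv, Equiv.trans_apply, Functor.comp_map,
    Adjunction.homEquiv_naturality_left, yonedaEquiv_naturality]

lemma sheafifiedYonedaEquiv_naturality_right {c : 𝒞} {X Z : Sheaf J (Type u)}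
    (x : (G).obj c ⟶ X) (f : X ⟶ Z) :
    sheafifiedYonedaEquiv J (x ≫ f) = f.hom.app (op c) (sheafifiedYonedaEquiv J x) := by
  simp only [sheafifiedYonedaEquiv, Equiv.trans_apply, Adjunction.homEquiv_naturality_right]
  exact yonedaEquiv_comp _ _

lemma sheafifiedYonedaEquiv_map {d c : 𝒞} (k : d ⟶ c) :
    sheafifiedYonedaEquiv J ((G).map k) = (toSheafify J (yoneda.obj c)).app (op d) k := by
  rw [sheafifiedYonedaEquiv, Equiv.trans_apply, Functor.comp_map,
    ← Category.comp_id ((presheafToSheaf J (Type u)).map _),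
    Adjunction.homEquiv_naturality_left, Adjunction.homEquiv_unit]
  simp [sheafificationAdjunction_unit_app, yonedaEquiv_apply, -toSheafify_naturality]

lemma sheafifiedYonedaEquiv_symm_naturality_left {c c' : 𝒞} (g : c' ⟶ c)
    {X : Sheaf J (Type u)} (z : X.obj.obj (op c)) :
    (sheafifiedYonedaEquiv J).symm (X.obj.map g.op z) =
      (G).map g ≫ (sheafifiedYonedaEquiv J).symm z :=
  (sheafifiedYonedaEquiv J).symm_apply_eq.2 <| by
    rw [sheafifiedYonedaEquiv_naturality_left, Equiv.apply_symm_apply]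

lemma sheafifiedYonedaEquiv_symm_naturality_right {c : 𝒞} {X Z : Sheaf J (Type u)}
    (z : X.obj.obj (op c)) (f : X ⟶ Z) :
    (sheafifiedYonedaEquiv J).symm (f.hom.app (op c) z) = (sheafifiedYonedaEquiv J).symm z ≫ f :=
  (sheafifiedYonedaEquiv J).symm_apply_eq.2 <| by
    rw [sheafifiedYonedaEquiv_naturality_right, Equiv.apply_symm_apply]

lemma imageSieve_mem {d c : 𝒞} (w : (G).obj d ⟶ (G).obj c) : (G).imageSieve w ∈ J d := by
  refine J.superset_covering ?_
    (Presheaf.imageSieve_mem J (toSheafify J (yoneda.obj c)) (sheafifiedYonedaEquiv J w))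
  rintro d' g ⟨k, hk⟩
  refine ⟨k, (sheafifiedYonedaEquiv J).injective ?_⟩
  rw [sheafifiedYonedaEquiv_naturality_left, sheafifiedYonedaEquiv_map]
  exact hk

lemma equalizer_mem {d c : 𝒞} {f₁ f₂ : d ⟶ c} (h : (G).map f₁ = (G).map f₂) :
    Sieve.equalizer f₁ f₂ ∈ J d := by
  apply Presheaf.equalizerSieve_mem J (toSheafify J (yoneda.obj c))
  simpa only [sheafifiedYonedaEquiv_map] using congrArg (sheafifiedYonedaEquiv J) h

variable (J) in
def topology : GrothendieckTopology (Sheaf J (Type u)) where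
  sieves X S := ∀ ⦃c : 𝒞⦄ (x : (G).obj c ⟶ X), (S.pullback x).functorPullback G ∈ J c
  top_mem' X c x := by simp
  pullback_stable' X Y S f hS c x := by
    rw [← Sieve.pullback_comp]
    exact hS _
  transitive' X S hS R hR c x := by
    refine J.transitive (hS x) _ fun c' g hg => ?_
    rw [← Sieve.functorPullback_pullback, ← Sieve.pullback_comp]
    simpa using hR hg (𝟙 _)

local notation "K" => topology J

def sieveSubfunctor {X : Sheaf J (Type u)} (S : Sieve X) : Subfunctor X.obj where
  obj c := {z | S.arrows ((sheafifiedYonedaEquiv J).symm z)}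
  map {c c'} g z (hz : S.arrows _) := by
    change S.arrows ((sheafifiedYonedaEquiv J).symm (X.obj.map g.unop.op z))
    rw [sheafifiedYonedaEquiv_symm_naturality_left]
    exact S.downward_closed hz _

lemma imageSieve_sieveSubfunctor_ι {X : Sheaf J (Type u)} (S : Sieve X) {c : 𝒞}
    (z : X.obj.obj (op c)) :
    Presheaf.imageSieve (sieveSubfunctor S).ι z =
      (S.pullback ((sheafifiedYonedaEquiv J).symm z)).functorPullback G := by
  ext c' g
  change (∃ t : (sieveSubfunctor S).toFunctor.obj (op c'), t.1 = X.obj.map g.op z) ↔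
    S.arrows ((G).map g ≫ (sheafifiedYonedaEquiv J).symm z)
  rw [← sheafifiedYonedaEquiv_symm_naturality_left]
  exact ⟨fun ⟨t, ht⟩ => ht ▸ t.2, fun h => ⟨⟨_, h⟩, rfl⟩⟩

lemma mem_topology_iff_isLocallySurjective {X : Sheaf J (Type u)} (S : Sieve X) :
    S ∈ K X ↔ Presheaf.IsLocallySurjective J (sieveSubfunctor S).ι := by
  refine ⟨fun hS => ⟨fun z => ?_⟩, fun hS c x => ?_⟩
  · rw [imageSieve_sieveSubfunctor_ι]
    exact hS _
  · simpa [imageSieve_sieveSubfunctor_ι] using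
      hS.imageSieve_mem (sheafifiedYonedaEquiv J x)

noncomputable def sieveSubfunctorLift {X : Sheaf J (Type u)} (S : Sieve X) :
    (presheafToSheaf J (Type u)).obj (sieveSubfunctor S).toFunctor ⟶ X :=
  ((sheafificationAdjunction J (Type u)).homEquiv _ _).symm (sieveSubfunctor S).ι

lemma toSheafify_comp_sieveSubfunctorLift {X : Sheaf J (Type u)} (S : Sieve X) :
    toSheafify J _ ≫ (sieveSubfunctorLift S).hom = (sieveSubfunctor S).ι := by
  rw [← sheafificationAdjunction_unit_app]
  exact ((sheafificationAdjunction J (Type u)).homEquiv_unit _ _ _).symm.trans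
    (Equiv.apply_symm_apply _ _)

lemma sieveSubfunctor_ι_comp_eq_iff {X Z : Sheaf J (Type u)} (S : Sieve X) (g h : X ⟶ Z) :
    (sieveSubfunctor S).ι ≫ g.hom = (sieveSubfunctor S).ι ≫ h.hom ↔
      ∀ ⦃W : Sheaf J (Type u)⦄ (f : W ⟶ X), S.arrows f → f ≫ g = f ≫ h := by
  refine ⟨fun H W f hf => ?_, fun H => ?_⟩
  · ext c w
    have hw : f.hom.app c w ∈ (sieveSubfunctor S).obj c := by
      change S.arrows _
      rw [sheafifiedYonedaEquiv_symm_naturality_right]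
      exact S.downward_closed hf _
    exact ConcreteCategory.congr_hom (congr_app H c) ⟨_, hw⟩
  · ext ⟨c⟩ ⟨z, hz⟩
    obtain ⟨x, rfl⟩ := (sheafifiedYonedaEquiv J).surjective z
    change g.hom.app (op c) (sheafifiedYonedaEquiv J x) =
      h.hom.app (op c) (sheafifiedYonedaEquiv J x)
    rw [← sheafifiedYonedaEquiv_naturality_right, ← sheafifiedYonedaEquiv_naturality_right,
      H x (by simpa [sieveSubfunctor] using hz)]

lemma sieveSubfunctorLift_comp_eq_iff {X Z : Sheaf J (Type u)} (S : Sieve X) (g h : X ⟶ Z) :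
    sieveSubfunctorLift S ≫ g = sieveSubfunctorLift S ≫ h ↔
      ∀ ⦃W : Sheaf J (Type u)⦄ (f : W ⟶ X), S.arrows f → f ≫ g = f ≫ h := by
  rw [← sieveSubfunctor_ι_comp_eq_iff,
    ← ((sheafificationAdjunction J (Type u)).homEquiv _ _).injective.eq_iff,
    Adjunction.homEquiv_naturality_right, Adjunction.homEquiv_naturality_right,
    sieveSubfunctorLift, Equiv.apply_symm_apply]
  rfl

lemma mem_topology_iff_jointlyEpic {X : Sheaf J (Type u)} (S : Sieve X) :
    S ∈ K X ↔ S.JointlyEpic := by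
  rw [mem_topology_iff_isLocallySurjective,
    Presheaf.isLocallySurjective_iff_of_fac J (toSheafify_comp_sieveSubfunctorLift S)]
  change Sheaf.IsLocallySurjective _ ↔ _
  rw [Sheaf.isLocallySurjective_iff_epi]
  refine ⟨fun _ Z g h H => (cancel_epi _).1 ((sieveSubfunctorLift_comp_eq_iff S g h).2 H),
    fun H => ⟨fun g h e => H g h ((sieveSubfunctorLift_comp_eq_iff S g h).1 e)⟩⟩

lemma coverPreserving : CoverPreserving J K G where
  cover_preserve {d} S hS c x := by
    refine J.transitive (imageSieve_mem x) _ fun c' g ⟨k, hk⟩ => ?_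
    refine J.superset_covering (fun c'' m hm => ?_) (J.pullback_stable k hS)
    refine ⟨c'', m ≫ k, 𝟙 _, hm, ?_⟩
    rw [Category.id_comp, Functor.map_comp, Functor.map_comp, Category.assoc, hk]

instance : (G).IsCoverDense K where
  is_cover X c x := by
    convert J.top_mem c
    ext c' g
    simpa using ⟨⟨c', 𝟙 _, (G).map g ≫ x, by simp⟩⟩

instance : (G).IsLocallyFull K where
  functorPushforward_imageSieve_mem f := coverPreserving.cover_preserve (imageSieve_mem f)

instance : (G).IsLocallyFaithful K where
  functorPushforward_equalizer_mem _ _ h := coverPreserving.cover_preserve (equalizer_mem h)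

lemma mem_of_functorPushforward_mem {d : 𝒞} {S : Sieve d}
    (hS : S.functorPushforward G ∈ K ((G).obj d)) : S ∈ J d := by
  -- `G g = h ≫ G s` with `s ∈ S`; locally `h = G l`, and then locally `g = l ≫ s`.
  refine J.transitive (hS (𝟙 _)) _ fun c g ⟨_, s, h, hs, hgh⟩ => ?_
  refine J.transitive (imageSieve_mem h) _ fun c' k ⟨l, hl⟩ => ?_
  have hG : (G).map (k ≫ g) = (G).map (l ≫ s) := by
    rw [Functor.map_comp, Functor.map_comp, hl, Category.assoc, ← hgh, Category.comp_id]
  refine J.superset_covering (fun c'' m (hm : m ≫ k ≫ g = m ≫ l ≫ s) => ?_) (equalizer_mem hG)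
  simpa [hm] using S.downward_closed hs (m ≫ l)

instance : (G).IsDenseSubsite J K where
  functorPushforward_mem_iff := ⟨mem_of_functorPushforward_mem, coverPreserving.cover_preserve⟩

variable (J) in
noncomputable def restrictYonedaIso :
    yoneda ⋙ (Functor.whiskeringLeft _ _ (Type u)).obj (G).op ≅ sheafToPresheaf J (Type u) :=
  NatIso.ofComponents
    (fun X => NatIso.ofComponents (fun c => (sheafifiedYonedaEquiv J).toIso)
      fun g => by ext x; exact sheafifiedYonedaEquiv_naturality_left g.unop x)
    fun f => by ext c x; exact sheafifiedYonedaEquiv_naturality_right x f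

noncomputable def representableBy (F : (Sheaf J (Type u))ᵒᵖ ⥤ Type u)
    (hF : Presheaf.IsSheaf K F) :
    F.RepresentableBy (((G).sheafPushforwardContinuous (Type u) J K).obj ⟨F, hF⟩) where
  homEquiv {Y} := Sheaf.homEquiv.trans <|
    ((restrictYonedaIso J).app Y).symm.homFromEquiv.trans <|
    (Functor.IsCoverDense.restrictHomEquivHom (ℱ' := ⟨F, hF⟩)).trans yonedaEquiv
  homEquiv_comp {Y Y'} f g := by
    change yonedaEquiv (Functor.IsCoverDense.restrictHomEquivHom (ℱ' := ⟨F, hF⟩)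
        ((restrictYonedaIso J).hom.app Y ≫ f.hom ≫ g.hom)) =
      F.map f.op (yonedaEquiv (Functor.IsCoverDense.restrictHomEquivHom (ℱ' := ⟨F, hF⟩)
        ((restrictYonedaIso J).hom.app Y' ≫ g.hom)))
    rw [yonedaEquiv_naturality, ← Functor.IsCoverDense.restrictHomEquivHom_naturality_left]
    exact congrArg (yonedaEquiv ∘ Functor.IsCoverDense.restrictHomEquivHom)
      ((restrictYonedaIso J).hom.naturality_assoc f g.hom).symm

lemma isSheaf_yoneda_obj (X : Sheaf J (Type u)) : Presheaf.IsSheaf K (yoneda.obj X) := by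
  let F := ((G).sheafPushforwardContinuous (Type u) J K).objPreimage X
  have i : ((G).sheafPushforwardContinuous (Type u) J K).obj F ≅ X :=
    ((G).sheafPushforwardContinuous (Type u) J K).objObjPreimageIso X
  exact (Presheaf.isSheaf_of_iso_iff
    ((yoneda.mapIso i).symm ≪≫ (representableBy F.obj F.property).toIso)).2 F.property

lemma isSheaf_iff_isRepresentable (F : (Sheaf J (Type u))ᵒᵖ ⥤ Type u) :
    Presheaf.IsSheaf K F ↔ F.IsRepresentable :=
  ⟨fun hF => (representableBy F hF).isRepresentable,
    fun ⟨X, ⟨r⟩⟩ => (Presheaf.isSheaf_of_iso_iff r.toIso).1 (isSheaf_yoneda_obj X)⟩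

end JointlyEpicTopology

theorem sheaf_for_jointlyEpic_topology_iff_representable
    {𝒞 : Type u} [SmallCategory 𝒞] (J : GrothendieckTopology 𝒞) :
    ∃ K : GrothendieckTopology (Sheaf J (Type u)),
      (∀ (X : Sheaf J (Type u)) (S : Sieve X), S ∈ K X ↔ S.JointlyEpic) ∧
      (∀ F : (Sheaf J (Type u))ᵒᵖ ⥤ Type u,
        Presheaf.IsSheaf K F ↔ F.IsRepresentable) :=
  ⟨JointlyEpicTopology.topology J, fun _ S => JointlyEpicTopology.mem_topology_iff_jointlyEpic S,
    JointlyEpicTopology.isSheaf_iff_isRepresentable⟩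
end

section
/- Let (R_i)_{i ∈ I} be a filtered (directed) system of commutative rings with colimit R, and let A be any type, regarded as a discrete topological space. Pullback along the induced continuous maps Spec R ⟶ Spec R_i on prime spectra defines a canonical map colim_{i ∈ I} LocallyConstant(Spec R_i, A) ⟶ LocallyConstant(Spec R, A) from the filtered colimit of the sets of locally constant A-valued functions on the spectra Spec R_i to the set of locally constant A-valued functions on Spec R, and this map is a bijection. -/
/-!
Clopen subsets of `Spec R` correspond to idempotents of `R`, and in a filtered colimit of rings
every idempotent comes from a finite stage, as does every equality between elements. Hence every
clopen of `Spec R` is pulled back from some `Spec R_j`, and a clopen of `Spec R_i` whose pullback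
is all of `Spec R` already pulls back to all of `Spec R_k` for some `i ⟶ k`.

Injectivity applies the second fact to the locus where two locally constant functions agree.
For surjectivity, a locally constant function on the quasi-compact `Spec R` has finitely many
fibres; they are lifted to a common stage, where the lifts need not be disjoint, and reassembled
by sending each point to the first listed value whose lifted fibre contains it.
-/

open CategoryTheory CategoryTheory.Limits

universe u

/-- The functor sending an object `i` of the index category to the set of locally constant
`A`-valued functions on `Spec (F.obj i)`, with transition maps given by pullback along the
induced maps on prime spectra. -/
@[simps]
noncomputable def locallyConstantSpecFunctor {I : Type u} [SmallCategory I]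
    (F : I ⥤ CommRingCat.{u}) (A : Type u) : I ⥤ Type u where
  obj i := LocallyConstant (PrimeSpectrum (F.obj i)) A
  map {i j} k := TypeCat.ofHom (LocallyConstant.comap
    (⟨PrimeSpectrum.comap (F.map k).hom, PrimeSpectrum.continuous_comap _⟩ : C(_, _)))
  map_id i := by
    ext g x
    simp [PrimeSpectrum.comap_id]
  map_comp {i j l} k₁ k₂ := by
    ext g x
    simp [PrimeSpectrum.comap_comp]

/-- The cocone on `locallyConstantSpecFunctor F A` with apex the locally constant `A`-valued
functions on the spectrum of the colimit ring, given by pullback along `Spec c.pt ⟶ Spec R_i`. -/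
@[simps]
noncomputable def locallyConstantSpecCocone {I : Type u} [SmallCategory I]
    (F : I ⥤ CommRingCat.{u}) (c : Cocone F) (A : Type u) :
    Cocone (locallyConstantSpecFunctor F A) where
  pt := LocallyConstant (PrimeSpectrum c.pt) A
  ι :=
    { app := fun i => TypeCat.ofHom (LocallyConstant.comap
      (⟨PrimeSpectrum.comap (c.ι.app i).hom, PrimeSpectrum.continuous_comap _⟩ : C(_, _)))
      naturality := fun i j k => by
        ext g
        refine LocallyConstant.ext fun x => ?_
        show DFunLike.coe (F := LocallyConstant (PrimeSpectrum (F.obj i)) A) g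
            (PrimeSpectrum.comap (F.map k).hom (PrimeSpectrum.comap (c.ι.app j).hom x)) =
          DFunLike.coe (F := LocallyConstant (PrimeSpectrum (F.obj i)) A) g (PrimeSpectrum.comap (c.ι.app i).hom x)
        simp only [← c.w k, CommRingCat.hom_comp, PrimeSpectrum.comap_comp, Function.comp_apply] }

open PrimeSpectrum

section FirstContaining

variable {X Y A : Type*}

open scoped Classical in
noncomputable def firstContaining (V : A → Set Y) (a₀ : A) : List A → Y → A
  | [] => fun _ => a₀
  | a :: L => fun y => if y ∈ V a then a else firstContaining V a₀ L y

theorem IsLocallyConstant.ite_mem [TopologicalSpace X] {U : Set X} [DecidablePred (· ∈ U)]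
    (hU : IsClopen U) {f g : X → A} (hf : IsLocallyConstant f) (hg : IsLocallyConstant g) :
    IsLocallyConstant fun x => if x ∈ U then f x else g x := by
  refine (IsLocallyConstant.iff_eventually_eq _).2 fun x => ?_
  by_cases hx : x ∈ U
  · filter_upwards [hU.isOpen.mem_nhds hx, hf.eventually_eq x] with y hy hfy
    simp [hx, hy, hfy]
  · filter_upwards [hU.compl.isOpen.mem_nhds hx, hg.eventually_eq x] with y hy hgy
    simp_all

theorem isLocallyConstant_firstContaining [TopologicalSpace Y] {V : A → Set Y} (a₀ : A)
    {L : List A} (hV : ∀ a ∈ L, IsClopen (V a)) :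
    IsLocallyConstant (firstContaining V a₀ L) := by
  induction L with
  | nil => exact IsLocallyConstant.const a₀
  | cons a L ih =>
    classical
    exact IsLocallyConstant.ite_mem (hV a List.mem_cons_self) (.const a)
      (ih fun b hb => hV b (List.mem_cons_of_mem a hb))

theorem firstContaining_apply_of_preimage_eq_fiber {φ : X → Y} {f : X → A} {V : A → Set Y}
    (a₀ : A) {L : List A} (hV : ∀ a ∈ L, φ ⁻¹' V a = f ⁻¹' {a}) {x : X} (hx : f x ∈ L) :
    firstContaining V a₀ L (φ x) = f x := by
  induction L with
  | nil => simp at hx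
  | cons a L ih =>
    have hxa : φ x ∈ V a ↔ f x = a := by
      rw [← Set.mem_preimage, hV a List.mem_cons_self, Set.mem_preimage, Set.mem_singleton_iff]
    by_cases h : f x = a
    · simp [firstContaining, hxa.2 h, h]
    · simp only [firstContaining, hxa, h, if_false]
      exact ih (fun b hb => hV b (List.mem_cons_of_mem a hb)) ((List.mem_cons.1 hx).resolve_left h)

end FirstContaining

theorem CategoryTheory.IsFiltered.exists_forall_mem_finset {C : Type*} [Category C] [IsFiltered C]
    {α : Type*} {P : α → C → Prop} (hP : ∀ a {i j : C}, (i ⟶ j) → P a i → P a j)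
    (s : Finset α) (h : ∀ a ∈ s, ∃ i, P a i) : ∃ j, ∀ a ∈ s, P a j := by
  classical
  induction s using Finset.induction_on with
  | empty => exact ⟨IsFiltered.nonempty.some, by simp⟩
  | insert a s _ ih =>
    obtain ⟨i, hi⟩ := h a (Finset.mem_insert_self a s)
    obtain ⟨j, hj⟩ := ih fun b hb => h b (Finset.mem_insert_of_mem hb)
    refine ⟨IsFiltered.max i j, fun b hb => ?_⟩
    rcases Finset.mem_insert.1 hb with rfl | hb
    · exact hP b (leftToMax i j) hi
    · exact hP b (rightToMax i j) (hj b hb)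

theorem IsLocallyConstant.isClopen_setOf_eq {X A : Type*} [TopologicalSpace X] {f g : X → A}
    (hf : IsLocallyConstant f) (hg : IsLocallyConstant g) : IsClopen {x | f x = g x} :=
  have h := hf.prodMk hg
  ⟨isOpen_compl_iff.1 (h {p | p.1 = p.2}ᶜ), h {p | p.1 = p.2}⟩

section FilteredColimit

variable {I : Type u} [SmallCategory I] {F : I ⥤ CommRingCat.{u}} {c : Cocone F}

theorem comap_map_comap_ι {i k : I} (m : i ⟶ k) (x : PrimeSpectrum c.pt) :
    comap (F.map m).hom (comap (c.ι.app k).hom x) = comap (c.ι.app i).hom x := by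
  rw [← comap_comp_apply, ← CommRingCat.hom_comp, c.w m]

variable (c) in
def ClopenDescendsTo (j : I) (U : Set (PrimeSpectrum c.pt)) : Prop :=
  ∃ V : Set (PrimeSpectrum (F.obj j)), IsClopen V ∧ comap (c.ι.app j).hom ⁻¹' V = U

theorem ClopenDescendsTo.map {i k : I} (m : i ⟶ k) {U : Set (PrimeSpectrum c.pt)}
    (hU : ClopenDescendsTo c i U) : ClopenDescendsTo c k U := by
  obtain ⟨V, hV, rfl⟩ := hU
  refine ⟨comap (F.map m).hom ⁻¹' V, hV.preimage (continuous_comap _), ?_⟩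
  rw [← Set.preimage_comp]
  exact congrArg (· ⁻¹' V) (funext (comap_map_comap_ι m))

variable [IsFiltered I] (hc : IsColimit c)
include hc

theorem exists_isIdempotentElem_ι_eq {e : c.pt} (he : IsIdempotentElem e) :
    ∃ j, ∃ x : F.obj j, IsIdempotentElem x ∧ c.ι.app j x = e := by
  obtain ⟨i, x, rfl⟩ := Concrete.isColimit_exists_rep F hc e
  obtain ⟨j, m, hm⟩ := (hc.eq_iff' (x * x) x).1 (by rw [map_mul]; exact he)
  exact ⟨j, F.map m x, by rw [IsIdempotentElem, ← map_mul, hm], c.w_apply m x⟩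

theorem exists_clopenDescendsTo {U : Set (PrimeSpectrum c.pt)} (hU : IsClopen U) :
    ∃ j, ClopenDescendsTo c j U := by
  obtain ⟨e, he, rfl⟩ := exists_idempotent_basicOpen_eq_of_isClopen hU
  obtain ⟨j, x, hx, rfl⟩ := exists_isIdempotentElem_ι_eq hc he
  exact ⟨j, basicOpen x, isClopen_iff.2 ⟨x, hx, rfl⟩, rfl⟩

theorem exists_preimage_comap_map_eq_univ {i : I} {V : Set (PrimeSpectrum (F.obj i))}
    (hV : IsClopen V) (h : comap (c.ι.app i).hom ⁻¹' V = Set.univ) :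
    ∃ k, ∃ m : i ⟶ k, comap (F.map m).hom ⁻¹' V = Set.univ := by
  obtain ⟨e, he, rfl⟩ := exists_idempotent_basicOpen_eq_of_isClopen hV
  have he_one : c.ι.app i e = c.ι.app i 1 := by
    rw [map_one]
    exact basicOpen_injOn_isIdempotentElem (he.map _) IsIdempotentElem.one
      (SetLike.coe_injective (by simpa using h))
  obtain ⟨k, m, hm⟩ := (hc.eq_iff' e 1).1 he_one
  refine ⟨k, m, ?_⟩
  change (basicOpen (F.map m e) : Set (PrimeSpectrum (F.obj k))) = _
  rw [hm, map_one, basicOpen_one, TopologicalSpace.Opens.coe_top]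

end FilteredColimit

section LocallyConstantSpec

variable {I : Type u} [SmallCategory I] {F : I ⥤ CommRingCat.{u}} {c : Cocone F} {A : Type u}

theorem locallyConstantSpecCocone_ι_app_eq_comap (i : I)
    (g : LocallyConstant (PrimeSpectrum (F.obj i)) A) :
    (locallyConstantSpecCocone F c A).ι.app i g =
      g.comap ⟨comap (c.ι.app i).hom, continuous_comap _⟩ :=
  rfl

theorem locallyConstantSpecFunctor_map_eq_comap {i j : I} (m : i ⟶ j)
    (g : LocallyConstant (PrimeSpectrum (F.obj i)) A) :
    (locallyConstantSpecFunctor F A).map m g =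
      g.comap ⟨comap (F.map m).hom, continuous_comap _⟩ :=
  rfl

variable [IsFiltered I] (hc : IsColimit c)
include hc

theorem exists_isEmpty_of_isEmpty [IsEmpty (PrimeSpectrum c.pt)] :
    ∃ k, IsEmpty (PrimeSpectrum (F.obj k)) := by
  obtain ⟨i⟩ := IsFiltered.nonempty (C := I)
  obtain ⟨k, m, hm⟩ := exists_preimage_comap_map_eq_univ hc (i := i) isClopen_empty
    (Set.eq_univ_of_forall fun x => isEmptyElim (α := PrimeSpectrum c.pt) x)
  exact ⟨k, ⟨fun y => by simpa using hm.symm.subset (Set.mem_univ y)⟩⟩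

theorem exists_locallyConstantSpecCocone_ι_app_eq (f : LocallyConstant (PrimeSpectrum c.pt) A) :
    ∃ j g, (locallyConstantSpecCocone F c A).ι.app j g = f := by
  rcases isEmpty_or_nonempty (PrimeSpectrum c.pt) with _ | ⟨⟨x₀⟩⟩
  · obtain ⟨k, _⟩ := exists_isEmpty_of_isEmpty hc
    exact ⟨k, ⟨isEmptyElim, .of_constant _ isEmptyElim⟩, LocallyConstant.ext isEmptyElim⟩
  set s := f.range_finite.toFinset
  obtain ⟨j, hj⟩ := IsFiltered.exists_forall_mem_finset
    (P := fun a j => ClopenDescendsTo c j (f ⁻¹' {a})) (fun _ _ _ m => ClopenDescendsTo.map m) s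
    fun a _ => exists_clopenDescendsTo hc (f.isLocallyConstant.isClopen_fiber a)
  choose! V hV using hj
  have hV' : ∀ a ∈ s.toList, IsClopen (V a) ∧ comap (c.ι.app j).hom ⁻¹' V a = f ⁻¹' {a} :=
    fun a ha => hV a (Finset.mem_toList.1 ha)
  refine ⟨j, ⟨firstContaining V (f x₀) s.toList,
    isLocallyConstant_firstContaining _ fun a ha => (hV' a ha).1⟩, ?_⟩
  refine LocallyConstant.ext fun x => firstContaining_apply_of_preimage_eq_fiber _
    (fun a ha => (hV' a ha).2) ?_
  simp [s]

theorem exists_locallyConstantSpecFunctor_map_eq {i : I}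
    {g h : LocallyConstant (PrimeSpectrum (F.obj i)) A}
    (hgh : (locallyConstantSpecCocone F c A).ι.app i g =
      (locallyConstantSpecCocone F c A).ι.app i h) :
    ∃ k, ∃ m : i ⟶ k,
      (locallyConstantSpecFunctor F A).map m g = (locallyConstantSpecFunctor F A).map m h := by
  rw [locallyConstantSpecCocone_ι_app_eq_comap, locallyConstantSpecCocone_ι_app_eq_comap] at hgh
  obtain ⟨k, m, hm⟩ := exists_preimage_comap_map_eq_univ hc
    (IsLocallyConstant.isClopen_setOf_eq g.isLocallyConstant h.isLocallyConstant)
    (Set.eq_univ_of_forall (LocallyConstant.congr_fun hgh))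
  refine ⟨k, m, ?_⟩
  rw [locallyConstantSpecFunctor_map_eq_comap, locallyConstantSpecFunctor_map_eq_comap]
  exact LocallyConstant.ext (Set.eq_univ_iff_forall.1 hm)

noncomputable def isColimitLocallyConstantSpecCocone :
    IsColimit (locallyConstantSpecCocone F c A) :=
  Types.FilteredColimit.isColimitOf' _ _
    (fun f => (exists_locallyConstantSpecCocone_ι_app_eq hc f).imp
      fun _ => Exists.imp fun _ => Eq.symm)
    (fun _ _ _ => exists_locallyConstantSpecFunctor_map_eq hc)

end LocallyConstantSpec

theorem locallyConstant_spec_colimit_bijective {I : Type u} [SmallCategory I] [IsFiltered I]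
    (F : I ⥤ CommRingCat.{u}) (c : Cocone F) (hc : IsColimit c) (A : Type u) :
    Function.Bijective
      (colimit.desc (locallyConstantSpecFunctor F A) (locallyConstantSpecCocone F c A)) :=
  (isIso_iff_bijective _).1
    (colimit.isoColimitCocone ⟨_, isColimitLocallyConstantSpecCocone (A := A) hc⟩).isIso_hom
end

section
/- Let K be a field, G a finite group, and L a nonzero commutative K-algebra equipped with an action of G by K-algebra automorphisms such that the K-algebra homomorphism L ⊗_K L ⟶ ∏_{g ∈ G} L, determined by x ⊗ y ↦ (x · g(y))_{g ∈ G}, is bijective. Then: (1) L is a finite-dimensional K-vector space of dimension equal to the order of G; (2) the induced action of G on the set of maximal ideals of L is transitive; and (3) for every maximal ideal m of L, the residue field L/m is a finite Galois field extension of K whose degree divides the order of G. -/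
/-!
The map `x ⊗ y ↦ (x * σ_h y)_h` is `L`-linear in the left factor, so it identifies `L ⊗[K] L` with
`L^H` as `L`-modules and `dim_K L = |H|`. Reducing modulo `m ⊗ 1 + 1 ⊗ m'` makes
`(L/m) ⊗[K] (L/m')` a quotient of `∏_h L/(m + σ_h m')`; the former is nonzero, so not every factor
vanishes, i.e. some `σ_h m'` equals `m`. For `m' = m` only the stabilizer `S` of `m` survives and
`(L/m) ⊗[K] (L/m) ≅ (L/m)^S`, so the residue field has degree `|S|` and at least `|S|`
automorphisms: it is Galois, and `|S|` divides `|G|`.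
-/

open scoped TensorProduct Pointwise

section

variable {K L H : Type*} [Field K] [CommRing L] [Algebra K L]

variable (K) in
noncomputable def torsorMap (σ : H → L ≃ₐ[K] L) : L ⊗[K] L →ₐ[L] (H → L) :=
  Algebra.TensorProduct.lift (Pi.constAlgHom L H L) (AlgHom.pi fun h => (σ h : L →ₐ[K] L))
    fun _ _ => Commute.all _ _

@[simp]
theorem torsorMap_tmul (σ : H → L ≃ₐ[K] L) (x y : L) (h : H) :
    torsorMap K σ (x ⊗ₜ y) h = x * σ h y :=
  rfl

theorem Ideal.IsMaximal.smul {M : Type*} [Group M] [MulSemiringAction M L] {m : Ideal L}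
    (hm : m.IsMaximal) (g : M) : (g • m).IsMaximal :=
  hm.map_bijective (MulSemiringAction.toRingHom M L g) (MulAction.bijective g)

variable {σ : H → L ≃ₐ[K] L}

theorem rank_eq_card_of_bijective_torsorMap [Nontrivial L] [Finite H]
    (hσ : Function.Bijective (torsorMap K σ)) : Module.rank K L = Nat.card H := by
  have := Fintype.ofFinite H
  have h := (LinearEquiv.ofBijective (torsorMap K σ).toLinearMap hσ).lift_rank_eq
  rwa [Module.rank_baseChange, rank_fun', Cardinal.lift_lift, Cardinal.lift_natCast,
    Cardinal.lift_eq_nat_iff, ← Nat.card_eq_fintype_card] at h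

theorem finiteDimensional_of_bijective_torsorMap [Nontrivial L] [Finite H]
    (hσ : Function.Bijective (torsorMap K σ)) : FiniteDimensional K L :=
  Module.rank_lt_aleph0_iff.mp <|
    (rank_eq_card_of_bijective_torsorMap hσ).trans_lt Cardinal.natCast_lt_aleph0

theorem finrank_eq_card_of_bijective_torsorMap [Nontrivial L] [Finite H]
    (hσ : Function.Bijective (torsorMap K σ)) : Module.finrank K L = Nat.card H :=
  Module.finrank_eq_of_rank_eq (rank_eq_card_of_bijective_torsorMap hσ)

theorem map_mkₐ_eq_zero_of_torsorMap_mem_sup [Finite H] (hσ : Function.Bijective (torsorMap K σ))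
    (I J : Ideal L) {w : L ⊗[K] L} (hw : ∀ h, torsorMap K σ w h ∈ I ⊔ σ h • J) :
    Algebra.TensorProduct.map (Ideal.Quotient.mkₐ K I) (Ideal.Quotient.mkₐ K J) w = 0 := by
  classical
  have := Fintype.ofFinite H
  have hdecomp : ∀ h, ∃ a ∈ I, ∃ y ∈ J, torsorMap K σ w h = a + σ h y := by
    intro h
    obtain ⟨a, ha, b, hb, hab⟩ := Submodule.mem_sup.mp (hw h)
    obtain ⟨y, hy, rfl⟩ := (Ideal.mem_map_of_equiv (σ h) b).mp hb
    exact ⟨a, ha, y, hy, hab.symm⟩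
  choose a ha y hy hwa using hdecomp
  let ε : H → L ⊗[K] L := fun h => (Equiv.ofBijective _ hσ).symm (Pi.single h 1)
  have hε : ∀ h, torsorMap K σ (ε h) = Pi.single h 1 := fun h =>
    (Equiv.ofBijective _ hσ).apply_symm_apply _
  have hw' : w = ∑ h, ε h * (a h ⊗ₜ 1 + 1 ⊗ₜ y h) := by
    refine hσ.1 (funext fun g => ?_)
    simp [hε, hwa, Pi.single_apply]
  rw [hw', map_sum]
  refine Finset.sum_eq_zero fun h _ => ?_
  simp [Ideal.Quotient.eq_zero_iff_mem.mpr (ha h), Ideal.Quotient.eq_zero_iff_mem.mpr (hy h)]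

theorem exists_smul_eq_of_bijective_torsorMap [Finite H]
    (hσ : Function.Bijective (torsorMap K σ)) (m m' : Ideal L) [hm : m.IsMaximal] [hm' : m'.IsMaximal] :
    ∃ h, σ h • m = m' := by
  by_contra! hne
  have hcoprime : ∀ h, m' ⊔ σ h • m = ⊤ := fun h =>
    hm'.coprime_of_ne (hm.smul (σ h)) (hne h).symm
  have hone := map_mkₐ_eq_zero_of_torsorMap_mem_sup hσ m' m (w := 1) fun h => by
    simp [hcoprime h]
  let := Ideal.Quotient.field m
  let := Ideal.Quotient.field m'
  have := Algebra.TensorProduct.nontrivial_of_algebraMap_injective_of_flat_left K (L ⧸ m') (L ⧸ m)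
    (algebraMap K (L ⧸ m)).injective
  exact one_ne_zero ((map_one _).symm.trans hone)

variable (σ) in
noncomputable def quotientStabilizerAlgEquiv (m : Ideal L) (h : {h : H // σ h • m = m}) :
    (L ⧸ m) ≃ₐ[K] (L ⧸ m) :=
  Ideal.quotientEquivAlg m m (σ h) h.2.symm

theorem torsorMap_quotientStabilizerAlgEquiv_map_mkₐ (m : Ideal L) (z : L ⊗[K] L)
    (h : {h : H // σ h • m = m}) :
    torsorMap K (quotientStabilizerAlgEquiv σ m)
        (Algebra.TensorProduct.map (Ideal.Quotient.mkₐ K m) (Ideal.Quotient.mkₐ K m) z) h =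
      Ideal.Quotient.mk m (torsorMap K σ z h) := by
  induction z using TensorProduct.induction_on with
  | zero => simp
  | tmul x y => rfl
  | add z z' hz hz' => simp only [map_add, Pi.add_apply, hz, hz']

theorem bijective_torsorMap_quotientStabilizerAlgEquiv [Finite H]
    (hσ : Function.Bijective (torsorMap K σ)) (m : Ideal L) [hm : m.IsMaximal] :
    Function.Bijective (torsorMap K (quotientStabilizerAlgEquiv σ m)) := by
  classical
  have hπ := Algebra.TensorProduct.map_surjective _ _ (Ideal.Quotient.mkₐ_surjective K m)
    (Ideal.Quotient.mkₐ_surjective K m)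
  constructor
  · rw [injective_iff_map_eq_zero]
    intro z hz
    obtain ⟨w, rfl⟩ := hπ z
    refine map_mkₐ_eq_zero_of_torsorMap_mem_sup hσ m m fun h => ?_
    by_cases hh : σ h • m = m
    · refine Submodule.mem_sup_left (Ideal.Quotient.eq_zero_iff_mem.mp ?_)
      rw [← torsorMap_quotientStabilizerAlgEquiv_map_mkₐ m w ⟨h, hh⟩, hz, Pi.zero_apply]
    · rw [hm.coprime_of_ne (hm.smul (σ h)) (Ne.symm hh)]
      exact Submodule.mem_top
  · intro v
    choose x hx using fun h => Ideal.Quotient.mk_surjective (v h)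
    obtain ⟨w, hw⟩ := hσ.2 fun g => if hg : σ g • m = m then x ⟨g, hg⟩ else 0
    refine ⟨Algebra.TensorProduct.map (Ideal.Quotient.mkₐ K m) (Ideal.Quotient.mkₐ K m) w,
      funext fun h => ?_⟩
    rw [torsorMap_quotientStabilizerAlgEquiv_map_mkₐ, hw]
    simp only [dif_pos h.2, hx]

theorem isGalois_of_bijective_torsorMap {E : Type*} [Field E] [Algebra K E] [Finite H]
    {τ : H → E ≃ₐ[K] E} (hτ : Function.Bijective (torsorMap K τ)) : IsGalois K E := by
  have := finiteDimensional_of_bijective_torsorMap hτ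
  have hτinj : Function.Injective τ := by
    classical
    intro h h' hhh'
    by_contra hne
    obtain ⟨z, hz⟩ := hτ.2 (Pi.single h 1)
    have hcoord : (Pi.evalAlgHom E _ h).comp (torsorMap K τ) =
        (Pi.evalAlgHom E _ h').comp (torsorMap K τ) :=
      Algebra.TensorProduct.ext' fun x y => by simp [hhh']
    simpa [hz, Ne.symm hne] using congr($hcoord z)
  refine IsGalois.of_card_aut_eq_finrank K E (le_antisymm ?_ ?_)
  · rw [Nat.card_eq_fintype_card]
    exact AlgEquiv.card_le
  · rw [finrank_eq_card_of_bijective_torsorMap hτ]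
    exact Nat.card_le_card_of_injective τ hτinj

end

universe u v w

theorem torsor_over_field_splits
    (K : Type u) (L : Type v) [Field K] [CommRing L] [Algebra K L] [Nontrivial L]
    (G : Type w) [Group G] [Finite G] (ρ : G →* (L ≃ₐ[K] L))
    (Φ : (L ⊗[K] L) →ₐ[K] (G → L))
    (hΦ : ∀ (x y : L) (g : G), Φ (x ⊗ₜ[K] y) g = x * ρ g y)
    (hbij : Function.Bijective Φ) :
    (FiniteDimensional K L ∧ Module.finrank K L = Nat.card G) ∧
    (∀ m m' : Ideal L, m.IsMaximal → m'.IsMaximal →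
      ∃ g : G, m.map ((ρ g : L ≃ₐ[K] L) : L →+* L) = m') ∧
    (∀ (m : Ideal L) (hm : m.IsMaximal),
      letI := Ideal.Quotient.field m
      FiniteDimensional K (L ⧸ m) ∧ IsGalois K (L ⧸ m) ∧
        Module.finrank K (L ⧸ m) ∣ Nat.card G) := by
  have hρ : Function.Bijective (torsorMap K ρ) := by
    have hΦρ : Φ = (torsorMap K ρ).restrictScalars K :=
      Algebra.TensorProduct.ext' fun x y => funext (hΦ x y)
    rwa [hΦρ] at hbij
  refine ⟨⟨finiteDimensional_of_bijective_torsorMap hρ, finrank_eq_card_of_bijective_torsorMap hρ⟩,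
    fun m m' _ _ => exists_smul_eq_of_bijective_torsorMap hρ m m', fun m _ => ?_⟩
  let := Ideal.Quotient.field m
  have hτ := bijective_torsorMap_quotientStabilizerAlgEquiv hρ m
  refine ⟨finiteDimensional_of_bijective_torsorMap hτ, isGalois_of_bijective_torsorMap hτ, ?_⟩
  rw [finrank_eq_card_of_bijective_torsorMap hτ]
  exact Subgroup.card_subgroup_dvd_card ((MulAction.stabilizer (L ≃ₐ[K] L) m).comap ρ)
end
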